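/- The encryption operator U_enc is unitary: U_enc * U_encᴴ = 1 and U_encᴴ * U_enc = 1. -/

import Mathlib

open Matrix Complex BigOperators
open scoped Kronecker
set_option linter.unusedSectionVars false

noncomputable section

/-- `ω = exp(2πi/d)`, the primitive `d`-th root of unity. -/
def ω (d : ℕ) : ℂ := Complex.exp (2 * Real.pi * Complex.I / d)

/-- `τ = exp(πi(d+1)/d)`, so that `τ² = ω`. -/
def τ (d : ℕ) : ℂ := Complex.exp (Real.pi * Complex.I * (d + 1) / d)

/-- The clock matrix `Z`, diagonal with entries `ω^(j.val)`. -/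
def Zmat (d : ℕ) : Matrix (ZMod d) (ZMod d) ℂ :=
  Matrix.diagonal fun j => ω d ^ (j.val)

/-- The shift matrix `X`, with `X j k = 1` iff `j = k + 1` in `ZMod d`. -/
def Xmat (d : ℕ) : Matrix (ZMod d) (ZMod d) ℂ :=
  Matrix.of fun j k => if j = k + 1 then 1 else 0

lemma omega_ne_zero (d : ℕ) : ω d ≠ 0 := Complex.exp_ne_zero _

/-- The clock matrix as an invertible matrix (a unit of the matrix ring). -/
def Zu (d : ℕ) [NeZero d] : (Matrix (ZMod d) (ZMod d) ℂ)ˣ where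
  val := Zmat d
  inv := Matrix.diagonal fun j => (ω d ^ (j.val))⁻¹
  val_inv := by
    rw [Zmat, Matrix.diagonal_mul_diagonal]
    have h : (fun j : ZMod d => ω d ^ j.val * (ω d ^ j.val)⁻¹) = fun _ => 1 := by
      funext j; exact mul_inv_cancel₀ (pow_ne_zero _ (omega_ne_zero d))
    rw [h, Matrix.diagonal_one]
  inv_val := by
    rw [Zmat, Matrix.diagonal_mul_diagonal]
    have h : (fun j : ZMod d => (ω d ^ j.val)⁻¹ * ω d ^ j.val) = fun _ => 1 := by
      funext j; exact inv_mul_cancel₀ (pow_ne_zero _ (omega_ne_zero d))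
    rw [h, Matrix.diagonal_one]

lemma Xmat_mul_transpose (d : ℕ) [NeZero d] : Xmat d * (Xmat d)ᵀ = 1 := by
  ext i j
  simp only [Matrix.mul_apply, Matrix.transpose_apply, Xmat, Matrix.of_apply,
    Matrix.one_apply, ite_mul, one_mul, zero_mul]
  have h : ∀ m : ZMod d,
      (if i = m + 1 then (if j = m + 1 then (1:ℂ) else 0) else 0)
        = (if m = i - 1 then (if j = m + 1 then (1:ℂ) else 0) else 0) := by
    intro m
    by_cases hm : i = m + 1
    · have hm' : m = i - 1 := by rw [hm]; ring
      rw [if_pos hm, if_pos hm']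
    · have hm' : ¬ m = i - 1 := fun h' => hm (by rw [h']; ring)
      rw [if_neg hm, if_neg hm']
  rw [Finset.sum_congr rfl fun m _ => h m, Finset.sum_ite_eq' Finset.univ (i - 1)]
  simp only [Finset.mem_univ, if_true, sub_add_cancel]
  by_cases hij : i = j
  · subst hij; simp
  · rw [if_neg (fun h' => hij h'.symm), if_neg hij]

/-- The shift matrix as an invertible matrix (a unit of the matrix ring). -/
def Xu (d : ℕ) [NeZero d] : (Matrix (ZMod d) (ZMod d) ℂ)ˣ :=
  ⟨Xmat d, (Xmat d)ᵀ, Xmat_mul_transpose d,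
    mul_eq_one_comm.mp (Xmat_mul_transpose d)⟩

/-- The Weyl–Heisenberg displacement operator `W(a,b) = τ^(ab) • X^a * Z^b`,
where `X^a`, `Z^b` are integer (`zpow`) powers of the invertible matrices `X`, `Z`. -/
def Wop (d : ℕ) [NeZero d] (a b : ℤ) : Matrix (ZMod d) (ZMod d) ℂ :=
  τ d ^ (a * b) •
    (((Xu d ^ a : (Matrix (ZMod d) (ZMod d) ℂ)ˣ) : Matrix (ZMod d) (ZMod d) ℂ) *
      ((Zu d ^ b : (Matrix (ZMod d) (ZMod d) ℂ)ˣ) : Matrix (ZMod d) (ZMod d) ℂ))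

/-- The maximally entangled vector `Φ(j,k) = 1/√d` if `j = k`, else `0`. -/
def MES (d : ℕ) : ZMod d × ZMod d → ℂ :=
  fun p => if p.1 = p.2 then ((1 / Real.sqrt d : ℝ) : ℂ) else 0

/-- The generalized Bell vector `B(a,b)(s,t) = ω^(−b·t.val)/√d` if `s = t − a`, else `0`. -/
def Bell (d : ℕ) (a b : ℤ) : ZMod d × ZMod d → ℂ :=
  fun p => if p.1 = p.2 - (a : ZMod d)
    then ω d ^ (-(b * (p.2.val : ℤ))) / ((Real.sqrt d : ℝ) : ℂ) else 0

/-- The phase `φ(a,b) = τ^(−(a² + b² − (n+1)·a·b))`. -/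
def φcoef (d n : ℕ) (a b : ℤ) : ℂ :=
  τ d ^ (-(a ^ 2 + b ^ 2 - ((n : ℤ) + 1) * a * b))

/-- The encryption operator `U_enc`. -/
def Uenc (d n : ℕ) [NeZero d] :
    Matrix (ZMod d × (Fin n → ZMod d)) (ZMod d × (Fin n → ZMod d)) ℂ :=
  Matrix.of fun p q => (1 / (d : ℂ)) *
    ∑ a ∈ Finset.range d, ∑ b ∈ Finset.range d,
      (φcoef d n a b)⁻¹ * Wop d a b p.1 q.1 *
        ∏ i, (Wop d a b)ᴴ (p.2 i) (q.2 i)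

/-- The decryption operator `U_dec` for decrypting the `l`-th signal qudit. -/
def Udec (d n : ℕ) [NeZero d] (l : Fin n) :
    Matrix (ZMod d × (Fin n → ZMod d)) (ZMod d × (Fin n → ZMod d)) ℂ :=
  Matrix.of fun p q =>
    ∑ a ∈ Finset.range d, ∑ b ∈ Finset.range d,
      φcoef d n a b * Bell d a b (p.1, p.2 l) *
        (starRingEnd ℂ) (Bell d a b (q.1, q.2 l)) *
        ∏ i ∈ Finset.univ.erase l, (Wop d a b)ᵀ (p.2 i) (q.2 i)

/-- The initial global state `Ψ₀(k,s,t) = ψ(k)·d^(−n/2)` if `s = t`, else `0`. -/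
def Ψinit (d n : ℕ) (ψ : ZMod d → ℂ) :
    ZMod d × (Fin n → ZMod d) × (Fin n → ZMod d) → ℂ :=
  fun p => if p.2.1 = p.2.2 then ψ p.1 * (((d : ℝ) ^ (-(n : ℝ) / 2) : ℝ) : ℂ) else 0

/-- The encrypted global state `Ψ_enc = U_enc Ψ₀` (U_enc acting on A and the signals). -/
def Ψenc (d n : ℕ) [NeZero d] (ψ : ZMod d → ℂ) :
    ZMod d × (Fin n → ZMod d) × (Fin n → ZMod d) → ℂ :=
  fun p => ∑ k' : ZMod d, ∑ s' : Fin n → ZMod d,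
    Uenc d n (p.1, p.2.1) (k', s') * Ψinit d n ψ (k', s', p.2.2)

/-- Assemble a function `Fin n → α` from a value `u` at index `i₀` and values `g`
on the remaining indices. -/
def insVal {α : Type*} {n : ℕ} (i₀ : Fin n) (u : α) (g : {i : Fin n // i ≠ i₀} → α) :
    Fin n → α :=
  fun i => if h : i = i₀ then u else g ⟨i, h⟩


section basics
variable (d : ℕ) [NeZero d]

lemma tau_ne_zero : τ d ≠ 0 := Complex.exp_ne_zero _

lemma dC_ne_zero : (d : ℂ) ≠ 0 := Nat.cast_ne_zero.mpr (NeZero.ne d)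

lemma tau_zpow (m : ℤ) : τ d ^ m = Complex.exp (m * (Real.pi * Complex.I * (d + 1) / d)) := by
  rw [τ, ← Complex.exp_int_mul]

lemma omega_eq_tau_sq : ω d = τ d ^ (2 : ℤ) := by
  have hd := dC_ne_zero d
  rw [tau_zpow, ω]
  rw [show (2:ℤ) * (Real.pi * Complex.I * (d + 1) / d)
      = 2 * Real.pi * Complex.I / d + 2 * Real.pi * Complex.I by
    push_cast; field_simp; ring]
  rw [Complex.exp_add, Complex.exp_two_pi_mul_I, mul_one]

lemma omega_zpow (m : ℤ) : ω d ^ m = τ d ^ (2 * m) := by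
  rw [omega_eq_tau_sq, ← _root_.zpow_mul]

lemma tau_zpow_two_d : τ d ^ (2 * (d:ℤ)) = 1 := by
  have hd := dC_ne_zero d
  rw [tau_zpow]
  rw [show ((2 * (d:ℤ) : ℤ) : ℂ) * (Real.pi * Complex.I * (d + 1) / d)
      = ((d:ℤ) + 1) * (2 * Real.pi * Complex.I) by
    push_cast; field_simp]
  exact_mod_cast Complex.exp_int_mul_two_pi_mul_I ((d:ℤ)+1)

lemma tau_zpow_d_sq : τ d ^ ((d:ℤ) * d) = 1 := by
  have hd := dC_ne_zero d
  obtain ⟨c, hc⟩ := Nat.even_mul_succ_self d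
  rw [tau_zpow]
  rw [show (((d:ℤ) * d : ℤ) : ℂ) * (Real.pi * Complex.I * (d + 1) / d)
      = ((c:ℤ) : ℂ) * (2 * Real.pi * Complex.I) by
    have h2 : ((d * (d+1) : ℕ) : ℂ) = ((c + c : ℕ) : ℂ) := by rw [hc]
    push_cast at h2 ⊢
    field_simp
    linear_combination h2]
  exact_mod_cast Complex.exp_int_mul_two_pi_mul_I (c:ℤ)

/-- τ^(2t) depends only on t mod d. -/
lemma tau_two_congr {t t' : ℤ} (h : (d:ℤ) ∣ t - t') : τ d ^ (2*t) = τ d ^ (2*t') := by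
  obtain ⟨u, hu⟩ := h
  have ht : t = t' + d * u := by linarith
  have h1 : τ d ^ ((2*(d:ℤ))*u) = 1 := by
    rw [_root_.zpow_mul, tau_zpow_two_d, _root_.one_zpow]
  rw [ht, show 2 * (t' + (d:ℤ) * u) = 2*t' + (2*(d:ℤ))*u by ring,
    zpow_add₀ (tau_ne_zero d), h1, mul_one]

/-- τ^(t²) depends only on t mod d. -/
lemma tau_sq_congr {t t' : ℤ} (h : (d:ℤ) ∣ t - t') : τ d ^ (t^2) = τ d ^ (t'^2) := by
  obtain ⟨u, hu⟩ := h
  have ht : t = t' + d * u := by linarith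
  have h1 : τ d ^ ((2*(d:ℤ))*(t'*u)) = 1 := by
    rw [_root_.zpow_mul, tau_zpow_two_d, _root_.one_zpow]
  have h2 : τ d ^ (((d:ℤ)*d)*(u*u)) = 1 := by
    rw [_root_.zpow_mul, tau_zpow_d_sq, _root_.one_zpow]
  rw [ht, show (t' + (d:ℤ)*u)^2 = t'^2 + (2*(d:ℤ))*(t'*u) + ((d:ℤ)*d)*(u*u) by ring,
    zpow_add₀ (tau_ne_zero d), zpow_add₀ (tau_ne_zero d), h1, h2, mul_one, mul_one]

lemma conj_tau_zpow (m : ℤ) : (starRingEnd ℂ) (τ d ^ m) = τ d ^ (-m) := by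
  have hconj : (starRingEnd ℂ) (τ d) = (τ d)⁻¹ := by
    rw [τ, ← Complex.exp_conj, ← Complex.exp_neg]
    congr 1
    simp only [map_div₀, _root_.map_mul, Complex.conj_I, _root_.map_add, Complex.conj_ofReal, _root_.map_one,
      map_natCast]
    ring
  rw [map_zpow₀, hconj, _root_.inv_zpow, ← _root_.zpow_neg]

end basics

section sums
variable (d : ℕ) [NeZero d]

lemma omega_prim : IsPrimitiveRoot (ω d) d := Complex.isPrimitiveRoot_exp d (NeZero.ne d)

lemma omega_zpow_eq_one {m : ℤ} (h : (d:ℤ) ∣ m) : ω d ^ m = 1 := by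
  obtain ⟨u, hu⟩ := h
  rw [hu, _root_.zpow_mul]
  rw [show ω d ^ (d:ℤ) = 1 by exact_mod_cast (omega_prim d).pow_eq_one]
  exact _root_.one_zpow u

/-- Sum over `ZMod d` of a function of `val` equals sum over `range d`. -/
lemma sum_zmod_val {M : Type*} [AddCommMonoid M] (f : ℕ → M) :
    ∑ x : ZMod d, f x.val = ∑ b ∈ Finset.range d, f b := by
  refine Finset.sum_nbij' (fun x => x.val) (fun b => (b : ZMod d)) ?_ ?_ ?_ ?_ ?_
  · intro x _; exact Finset.mem_range.mpr (ZMod.val_lt x)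
  · intro b _; exact Finset.mem_univ _
  · intro x _; simp [ZMod.natCast_zmod_val]
  · intro b hb; exact ZMod.val_cast_of_lt (Finset.mem_range.mp hb)
  · intro x _; rfl

/-- Root-of-unity orthogonality. -/
lemma orth (m : ℤ) :
    ∑ x : ZMod d, ω d ^ ((x.val : ℤ) * m) = if (d:ℤ) ∣ m then (d:ℂ) else 0 := by
  have hterm : ∀ v : ℕ, ω d ^ ((v : ℤ) * m) = (ω d ^ m) ^ v := by
    intro v
    rw [mul_comm, _root_.zpow_mul, zpow_natCast]
  by_cases h : (d:ℤ) ∣ m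
  · simp only [if_pos h]
    have : ∀ x : ZMod d, ω d ^ ((x.val : ℤ) * m) = 1 := fun x =>
      omega_zpow_eq_one d (Dvd.dvd.mul_left h _)
    rw [Finset.sum_congr rfl (fun x _ => this x), Finset.sum_const, Finset.card_univ,
      ZMod.card, nsmul_eq_mul, mul_one]
  · simp only [if_neg h]
    have hz : ω d ^ m ≠ 1 := fun hc => h (((omega_prim d).zpow_eq_one_iff_dvd m).mp hc)
    calc ∑ x : ZMod d, ω d ^ ((x.val : ℤ) * m)
        = ∑ b ∈ Finset.range d, (ω d ^ m) ^ b := by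
          rw [← sum_zmod_val d (fun v => (ω d ^ m) ^ v)]
          exact Finset.sum_congr rfl fun x _ => hterm x.val
      _ = ((ω d ^ m) ^ d - 1) / (ω d ^ m - 1) := geom_sum_eq hz d
      _ = 0 := by
          rw [← zpow_natCast (ω d ^ m), ← _root_.zpow_mul,
            omega_zpow_eq_one d ⟨m, mul_comm m d⟩, sub_self, zero_div]

/-- Same orthogonality, phrased with τ. -/
lemma orth' (m : ℤ) :
    ∑ x : ZMod d, τ d ^ (2 * ((x.val : ℤ) * m)) = if (d:ℤ) ∣ m then (d:ℂ) else 0 := by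
  rw [← orth d m]
  exact Finset.sum_congr rfl fun x _ => (omega_zpow d _).symm

lemma prod_ite_all {n : ℕ} (P : Fin n → Prop) [DecidablePred P] (f : Fin n → ℂ) :
    (∏ i, if P i then f i else 0) = if (∀ i, P i) then ∏ i, f i else 0 := by
  by_cases h : ∀ i, P i
  · rw [if_pos h]; exact Finset.prod_congr rfl fun i _ => if_pos (h i)
  · rw [if_neg h]
    push_neg at h
    obtain ⟨i, hi⟩ := h
    exact Finset.prod_eq_zero (Finset.mem_univ i) (if_neg hi)

lemma zpow_prod (x : ℂ) (hx : x ≠ 0) {n : ℕ} (e : Fin n → ℤ) :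
    ∏ i, x ^ e i = x ^ (∑ i, e i) := by
  induction n with
  | zero => simp
  | succ k ih =>
    rw [Fin.prod_univ_succ, Fin.sum_univ_succ, zpow_add₀ hx, ih (fun i => e i.succ)]

end sums

section wop
variable (d : ℕ) [NeZero d]


lemma Xmat_pow (a : ℕ) (j k : ZMod d) :
    (Xmat d ^ a) j k = if j = k + (a : ZMod d) then 1 else 0 := by
  induction a generalizing j k with
  | zero => simp [Matrix.one_apply, eq_comm]
  | succ m ih =>
    rw [pow_succ, Matrix.mul_apply]
    have hterm : ∀ x : ZMod d,
        (Xmat d ^ m) j x * Xmat d x k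
          = if x = k + 1 then (if j = x + (m : ZMod d) then 1 else 0) else 0 := by
      intro x
      rw [ih]
      by_cases hx : x = k + 1
      · simp [Xmat, hx]
      · simp [Xmat, hx]
    rw [Finset.sum_congr rfl fun x _ => hterm x, Finset.sum_ite_eq' Finset.univ (k+1)]
    simp only [Finset.mem_univ, if_true]
    have : k + 1 + (m : ZMod d) = k + ((m+1 : ℕ) : ZMod d) := by push_cast; ring
    rw [this]

lemma Zmat_pow (b : ℕ) :
    Zmat d ^ b = Matrix.diagonal (fun j => ω d ^ (b * j.val)) := by
  have h : ((fun j : ZMod d => ω d ^ j.val) ^ b) = fun j => ω d ^ (b * j.val) := by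
    funext j
    rw [Pi.pow_apply, ← pow_mul, mul_comm]
  rw [Zmat, Matrix.diagonal_pow, h]

end wop

section wop2
variable (d : ℕ) [NeZero d]

lemma Wop_apply (a b : ℕ) (j k : ZMod d) :
    Wop d a b j k = if j = k + (a : ZMod d)
      then τ d ^ ((a:ℤ)*(b:ℤ) + 2*(b:ℤ)*(k.val:ℤ)) else 0 := by
  have hX : ((Xu d ^ ((a:ℕ):ℤ) : (Matrix (ZMod d) (ZMod d) ℂ)ˣ) : Matrix (ZMod d) (ZMod d) ℂ)
      = Xmat d ^ a := by
    rw [zpow_natCast, Units.val_pow_eq_pow_val]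
    rfl
  have hZ : ((Zu d ^ ((b:ℕ):ℤ) : (Matrix (ZMod d) (ZMod d) ℂ)ˣ) : Matrix (ZMod d) (ZMod d) ℂ)
      = Zmat d ^ b := by
    rw [zpow_natCast, Units.val_pow_eq_pow_val]
    rfl
  rw [Wop, hX, hZ, Zmat_pow, Matrix.smul_apply, Matrix.mul_diagonal, Xmat_pow]
  have hω : ω d ^ (b * k.val) = τ d ^ (2*(b:ℤ)*(k.val:ℤ)) := by
    rw [← zpow_natCast (ω d), omega_zpow]
    congr 1
    push_cast
    ring
  by_cases hc : j = k + (a : ZMod d)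
  · rw [if_pos hc, if_pos hc, one_mul, hω, smul_eq_mul, ← zpow_add₀ (tau_ne_zero d)]
  · rw [if_neg hc, if_neg hc, zero_mul, smul_zero]

end wop2


/-- The Gauss-type sum appearing in the entries of `Uenc`. -/
def GS (d : ℕ) (M : ℤ) : ℂ := ∑ b ∈ Finset.range d, τ d ^ ((b:ℤ)^2 + 2*(b:ℤ)*M)

section entry
variable (d n : ℕ) [NeZero d]

lemma Uenc_apply (p q : ZMod d × (Fin n → ZMod d)) :
    Uenc d n p q = if ∀ i, q.2 i = p.2 i + (p.1 - q.1) then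
      (1/(d:ℂ)) * (τ d ^ ((((p.1 - q.1).val : ℤ))^2) *
        GS d ((q.1.val:ℤ) - (∑ i, ((p.2 i).val:ℤ)) - (n:ℤ) * ((p.1 - q.1).val:ℤ)))
    else 0 := by
  set A : ℕ := (p.1 - q.1).val with hAdef
  set T : ℤ := ∑ i, ((p.2 i).val : ℤ) with hTdef
  have hA_mem : A ∈ Finset.range d := Finset.mem_range.mpr (ZMod.val_lt _)
  have hAc : ((A:ℕ) : ZMod d) = p.1 - q.1 := ZMod.natCast_zmod_val _
  set Cond : Prop := ∀ i, q.2 i = p.2 i + (p.1 - q.1) with hConddef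
  have hterm : ∀ a ∈ Finset.range d, ∀ b ∈ Finset.range d,
      (φcoef d n a b)⁻¹ * Wop d a b p.1 q.1 * ∏ i, (Wop d a b)ᴴ (p.2 i) (q.2 i)
      = if a = A then (if Cond then
          τ d ^ ((a:ℤ)^2 + (b:ℤ)^2 + 2*(b:ℤ)*((q.1.val:ℤ) - T - (n:ℤ)*(a:ℤ))) else 0)
        else 0 := by
    intro a ha b hb
    have h1 : ∀ i, (Wop d a b)ᴴ (p.2 i) (q.2 i)
        = if q.2 i = p.2 i + (a:ZMod d)
          then τ d ^ (-((a:ℤ)*(b:ℤ) + 2*(b:ℤ)*(((p.2 i).val:ℤ)))) else 0 := by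
      intro i
      rw [Matrix.conjTranspose_apply, Wop_apply]
      by_cases hc : q.2 i = p.2 i + (a:ZMod d)
      · rw [if_pos hc, if_pos hc,
          show (star (τ d ^ ((a:ℤ)*(b:ℤ) + 2*(b:ℤ)*(((p.2 i).val:ℤ)))) : ℂ)
            = (starRingEnd ℂ) (τ d ^ ((a:ℤ)*(b:ℤ) + 2*(b:ℤ)*(((p.2 i).val:ℤ)))) from rfl,
          conj_tau_zpow]
      · rw [if_neg hc, if_neg hc, star_zero]
    have hsum : (∑ i : Fin n, (-((a:ℤ)*(b:ℤ) + 2*(b:ℤ)*(((p.2 i).val:ℤ)))))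
        = -((n:ℤ)*((a:ℤ)*(b:ℤ)) + 2*(b:ℤ)*T) := by
      have h2 : ∀ i : Fin n, -((a:ℤ)*(b:ℤ) + 2*(b:ℤ)*(((p.2 i).val:ℤ)))
          = -((a:ℤ)*(b:ℤ)) + (-(2*(b:ℤ)))*(((p.2 i).val:ℤ)) := fun i => by ring
      rw [Finset.sum_congr rfl (fun i _ => h2 i), Finset.sum_add_distrib,
        Finset.sum_const, Finset.card_univ, Fintype.card_fin, ← Finset.mul_sum,
        ← hTdef, nsmul_eq_mul]
      push_cast
      ring
    have hprod : (∏ i, (Wop d a b)ᴴ (p.2 i) (q.2 i))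
        = if (∀ i, q.2 i = p.2 i + (a : ZMod d)) then
            τ d ^ (-((n:ℤ)*((a:ℤ)*(b:ℤ)) + 2*(b:ℤ)*T)) else 0 := by
      rw [Finset.prod_congr rfl (fun i _ => h1 i), prod_ite_all]
      by_cases hC : ∀ i, q.2 i = p.2 i + (a:ZMod d)
      · rw [if_pos hC, if_pos hC, zpow_prod _ (tau_ne_zero d), hsum]
      · rw [if_neg hC, if_neg hC]
    have hphi : (φcoef d n a b)⁻¹
        = τ d ^ ((a:ℤ)^2 + (b:ℤ)^2 - ((n:ℤ)+1)*(a:ℤ)*(b:ℤ)) := by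
      rw [φcoef, ← _root_.zpow_neg, neg_neg]
    by_cases haA : a = A
    · have haZ : ((a:ℕ) : ZMod d) = p.1 - q.1 := by rw [haA, hAc]
      have hc1 : p.1 = q.1 + ((a:ℕ) : ZMod d) := by rw [haZ]; ring
      rw [if_pos haA, Wop_apply, if_pos hc1, hprod]
      have hCiff : (∀ i, q.2 i = p.2 i + ((a:ℕ) : ZMod d)) ↔ Cond := by
        rw [hConddef, haZ]
      by_cases hC : Cond
      · rw [if_pos (hCiff.mpr hC), if_pos hC, hphi,
          ← zpow_add₀ (tau_ne_zero d), ← zpow_add₀ (tau_ne_zero d)]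
        congr 1
        push_cast
        ring
      · rw [if_neg (fun h => hC (hCiff.mp h)), if_neg hC, mul_zero]
    · have hc1 : ¬ p.1 = q.1 + ((a:ℕ) : ZMod d) := by
        intro h
        apply haA
        have : ((a:ℕ) : ZMod d) = p.1 - q.1 := by rw [h]; ring
        rw [hAdef, ← this, ZMod.val_cast_of_lt (Finset.mem_range.mp ha)]
      rw [if_neg haA, Wop_apply, if_neg hc1, mul_zero, zero_mul]
  rw [Uenc]
  simp only [Matrix.of_apply]
  rw [Finset.sum_congr rfl (fun a ha => Finset.sum_congr rfl (fun b hb => hterm a ha b hb))]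
  have hswap : ∀ a ∈ Finset.range d,
      (∑ b ∈ Finset.range d, if a = A then (if Cond then
          τ d ^ ((a:ℤ)^2 + (b:ℤ)^2 + 2*(b:ℤ)*((q.1.val:ℤ) - T - (n:ℤ)*(a:ℤ))) else 0)
        else 0)
      = if a = A then (if Cond then
          ∑ b ∈ Finset.range d,
            τ d ^ ((a:ℤ)^2 + (b:ℤ)^2 + 2*(b:ℤ)*((q.1.val:ℤ) - T - (n:ℤ)*(a:ℤ))) else 0)
        else 0 := by
    intro a _
    by_cases haA : a = A
    · by_cases hC : Cond <;> simp [haA, hC]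
    · simp [haA]
  rw [Finset.sum_congr rfl hswap, Finset.sum_ite_eq' (Finset.range d) A, if_pos hA_mem]
  have hGS : (∑ b ∈ Finset.range d,
      τ d ^ ((A:ℤ)^2 + (b:ℤ)^2 + 2*(b:ℤ)*((q.1.val:ℤ) - T - (n:ℤ)*(A:ℤ))))
      = τ d ^ ((A:ℤ)^2) * GS d ((q.1.val:ℤ) - T - (n:ℤ)*(A:ℤ)) := by
    rw [GS, Finset.mul_sum]
    refine Finset.sum_congr rfl fun b _ => ?_
    rw [← zpow_add₀ (tau_ne_zero d)]
    congr 1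
    ring
  by_cases hC : Cond
  · rw [if_pos hC, if_pos hC, hGS]
  · rw [if_neg hC, if_neg hC, mul_zero]

end entry


section keysec
variable (d n : ℕ) [NeZero d]

lemma dvd_of_zmod_eq {a b : ℤ} (h : ((a : ZMod d) = (b : ZMod d))) : (d:ℤ) ∣ a - b := by
  have h2 : ((a - b : ℤ) : ZMod d) = 0 := by push_cast; rw [h]; ring
  exact (ZMod.intCast_zmod_eq_zero_iff_dvd _ d).mp h2

lemma gauss_cross (M Mt : ℤ) (h : (d:ℤ) ∣ M - Mt) :
    GS d M * (starRingEnd ℂ) (GS d Mt) = (d:ℂ) := by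
  have hτ := tau_ne_zero d
  have hGM : GS d M = ∑ x : ZMod d, τ d ^ (((x.val:ℤ))^2 + 2*(x.val:ℤ)*M) := by
    rw [GS, ← sum_zmod_val d (fun v => τ d ^ (((v:ℤ))^2 + 2*((v:ℤ))*M))]
  have hGMt : (starRingEnd ℂ) (GS d Mt)
      = ∑ y : ZMod d, τ d ^ (-(((y.val:ℤ))^2 + 2*(y.val:ℤ)*Mt)) := by
    rw [GS, ← sum_zmod_val d (fun v => τ d ^ (((v:ℤ))^2 + 2*((v:ℤ))*Mt)), map_sum]
    exact Finset.sum_congr rfl fun y _ => by rw [conj_tau_zpow]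
  rw [hGM, hGMt, Finset.sum_mul_sum, Finset.sum_comm]
  have hstep : ∀ y : ZMod d,
      (∑ x : ZMod d, τ d ^ (((x.val:ℤ))^2 + 2*(x.val:ℤ)*M)
          * τ d ^ (-(((y.val:ℤ))^2 + 2*(y.val:ℤ)*Mt)))
      = ∑ γ : ZMod d, (τ d ^ (((γ.val:ℤ))^2 + 2*(γ.val:ℤ)*M)
          * τ d ^ (2*((y.val:ℤ)*((γ.val:ℤ) + M - Mt)))) := by
    intro y
    rw [← Equiv.sum_comp (Equiv.addLeft y)
      (fun x : ZMod d => τ d ^ (((x.val:ℤ))^2 + 2*(x.val:ℤ)*M)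
          * τ d ^ (-(((y.val:ℤ))^2 + 2*(y.val:ℤ)*Mt)))]
    refine Finset.sum_congr rfl fun γ _ => ?_
    simp only [Equiv.coe_addLeft]
    have hcast : (((((y + γ : ZMod d)).val:ℤ)) : ZMod d)
        = (((y.val:ℤ) + (γ.val:ℤ) : ℤ) : ZMod d) := by
      push_cast [ZMod.natCast_zmod_val]
      ring
    have hdvd : (d:ℤ) ∣ (((y + γ : ZMod d).val:ℤ) - ((y.val:ℤ) + (γ.val:ℤ))) :=
      dvd_of_zmod_eq d hcast
    have e1 : τ d ^ ((((y + γ : ZMod d).val:ℤ))^2)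
        = τ d ^ (((y.val:ℤ) + (γ.val:ℤ))^2) := tau_sq_congr d hdvd
    have e2 : τ d ^ (2*(((y + γ : ZMod d).val:ℤ)*M))
        = τ d ^ (2*(((y.val:ℤ) + (γ.val:ℤ))*M)) := by
      refine tau_two_congr d ?_
      have h2 := hdvd.mul_right M
      rw [show ((((y + γ : ZMod d).val:ℤ)) - ((y.val:ℤ) + (γ.val:ℤ)))*M
          = (((y + γ : ZMod d).val:ℤ))*M - ((y.val:ℤ) + (γ.val:ℤ))*M by ring] at h2
      exact h2
    rw [show ((((y + γ : ZMod d).val:ℤ))^2 + 2*(((y + γ : ZMod d).val:ℤ))*M)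
        = (((y + γ : ZMod d).val:ℤ))^2 + 2*((((y + γ : ZMod d).val:ℤ))*M) by ring,
      zpow_add₀ hτ, e1, e2]
    rw [← zpow_add₀ hτ, ← zpow_add₀ hτ, ← zpow_add₀ hτ]
    congr 1
    ring
  rw [Finset.sum_congr rfl fun y _ => hstep y, Finset.sum_comm]
  have hinner : ∀ γ : ZMod d,
      (∑ y : ZMod d, (τ d ^ (((γ.val:ℤ))^2 + 2*(γ.val:ℤ)*M)
          * τ d ^ (2*((y.val:ℤ)*((γ.val:ℤ) + M - Mt)))))
      = if γ = 0 then (d:ℂ) else 0 := by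
    intro γ
    rw [← Finset.mul_sum, orth' d ((γ.val:ℤ) + M - Mt)]
    by_cases hγ : γ = 0
    · subst hγ
      have hv : (((0 : ZMod d).val:ℤ)) = 0 := by
        rw [ZMod.val_zero]; rfl
      rw [if_pos, if_pos rfl, hv]
      · norm_num
      · rw [hv, zero_add]
        exact h
    · rw [if_neg hγ, if_neg, mul_zero]
      intro hc
      have h3 : (d:ℤ) ∣ ((γ.val:ℤ) + M - Mt) - (M - Mt) := dvd_sub hc h
      rw [show ((γ.val:ℤ) + M - Mt) - (M - Mt) = (γ.val:ℤ) by ring] at h3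
      have h4 : (d:ℕ) ∣ γ.val := Int.ofNat_dvd.mp h3
      exact hγ ((ZMod.val_eq_zero γ).mp (Nat.eq_zero_of_dvd_of_lt h4 (ZMod.val_lt γ)))
  rw [Finset.sum_congr rfl fun γ _ => hinner γ,
    Finset.sum_ite_eq' Finset.univ (0 : ZMod d) (fun _ => (d:ℂ)), if_pos (Finset.mem_univ _)]

end keysec


section keysec2
variable (d n : ℕ) [NeZero d]

lemma key (k kt : ZMod d) (T Tt : ℤ)
    (h : (d:ℤ) ∣ (Tt - T) - (n:ℤ) * ((k.val:ℤ) - (kt.val:ℤ))) :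
    ∑ u : ZMod d,
      (τ d ^ ((((k - u).val:ℤ))^2) * GS d ((u.val:ℤ) - T - (n:ℤ)*(((k-u).val:ℤ))))
      * (starRingEnd ℂ) (τ d ^ ((((kt - u).val:ℤ))^2)
          * GS d ((u.val:ℤ) - Tt - (n:ℤ)*(((kt-u).val:ℤ))))
    = if k = kt then ((d:ℂ))^2 else 0 := by
  have hτ := tau_ne_zero d
  have hterm : ∀ u : ZMod d,
      (τ d ^ ((((k - u).val:ℤ))^2) * GS d ((u.val:ℤ) - T - (n:ℤ)*(((k-u).val:ℤ))))
      * (starRingEnd ℂ) (τ d ^ ((((kt - u).val:ℤ))^2)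
          * GS d ((u.val:ℤ) - Tt - (n:ℤ)*(((kt-u).val:ℤ))))
      = τ d ^ (((k.val:ℤ))^2 - ((kt.val:ℤ))^2)
          * τ d ^ (2*((u.val:ℤ)*((kt.val:ℤ) - (k.val:ℤ)))) * (d:ℂ) := by
    intro u
    have hAd : (d:ℤ) ∣ ((((k - u).val:ℤ)) - (((kt - u).val:ℤ)))
        - ((k.val:ℤ) - (kt.val:ℤ)) := by
      refine dvd_of_zmod_eq d ?_
      push_cast [ZMod.natCast_zmod_val]
      ring
    have hMM : (d:ℤ) ∣ ((u.val:ℤ) - T - (n:ℤ)*(((k-u).val:ℤ)))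
        - ((u.val:ℤ) - Tt - (n:ℤ)*(((kt-u).val:ℤ))) := by
      obtain ⟨c1, hc1⟩ := h
      obtain ⟨c2, hc2⟩ := hAd
      exact ⟨c1 - (n:ℤ)*c2, by linear_combination hc1 - (n:ℤ)*hc2⟩
    have hg := gauss_cross d ((u.val:ℤ) - T - (n:ℤ)*(((k-u).val:ℤ)))
      ((u.val:ℤ) - Tt - (n:ℤ)*(((kt-u).val:ℤ))) hMM
    rw [_root_.map_mul, conj_tau_zpow, mul_mul_mul_comm, hg]
    congr 1
    have e1 : τ d ^ ((((k - u).val:ℤ))^2) = τ d ^ (((k.val:ℤ) - (u.val:ℤ))^2) := by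
      refine tau_sq_congr d (dvd_of_zmod_eq d ?_)
      push_cast [ZMod.natCast_zmod_val]
      ring
    have e2' : τ d ^ ((((kt - u).val:ℤ))^2) = τ d ^ (((kt.val:ℤ) - (u.val:ℤ))^2) := by
      refine tau_sq_congr d (dvd_of_zmod_eq d ?_)
      push_cast [ZMod.natCast_zmod_val]
      ring
    have e2 : τ d ^ (-((((kt - u).val:ℤ))^2)) = τ d ^ (-(((kt.val:ℤ) - (u.val:ℤ))^2)) := by
      rw [_root_.zpow_neg, e2', ← _root_.zpow_neg]
    rw [e1, e2, ← zpow_add₀ hτ, ← zpow_add₀ hτ]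
    congr 1
    ring
  rw [Finset.sum_congr rfl fun u _ => hterm u, ← Finset.sum_mul, ← Finset.mul_sum,
    orth' d ((kt.val:ℤ) - (k.val:ℤ))]
  by_cases hk : k = kt
  · subst hk
    rw [sub_self, sub_self, if_pos (dvd_zero _), if_pos rfl, zpow_zero, one_mul]
    ring
  · have hnd : ¬ (d:ℤ) ∣ ((kt.val:ℤ) - (k.val:ℤ)) := by
      intro hc
      have h0 : (((kt.val:ℤ) - (k.val:ℤ) : ℤ) : ZMod d) = 0 :=
        (ZMod.intCast_zmod_eq_zero_iff_dvd _ d).mpr hc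
      push_cast [ZMod.natCast_zmod_val] at h0
      exact hk (sub_eq_zero.mp h0).symm
    rw [if_neg hk, if_neg hnd, mul_zero, zero_mul]

end keysec2

/-- the encryption operator `U_enc` is unitary. -/
theorem Uenc_unitary (d n : ℕ) [NeZero d] (hd : 2 ≤ d) (hn : 1 ≤ n) :
    Uenc d n * (Uenc d n)ᴴ = 1 ∧ (Uenc d n)ᴴ * Uenc d n = 1 := by
  have hmain : Uenc d n * (Uenc d n)ᴴ = 1 := by
    ext p q
    obtain ⟨k, s⟩ := p
    obtain ⟨kt, st⟩ := q
    rw [Matrix.mul_apply]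
    simp only [Matrix.conjTranspose_apply, Complex.star_def]
    rw [Fintype.sum_prod_type]
    set T : ℤ := ∑ i, ((s i).val : ℤ) with hT
    set Tt : ℤ := ∑ i, ((st i).val : ℤ) with hTt
    set F1 : ZMod d → ℂ := fun u => (1/(d:ℂ)) * (τ d ^ ((((k - u).val:ℤ))^2)
        * GS d ((u.val:ℤ) - T - (n:ℤ)*(((k-u).val:ℤ)))) with hF1
    set F2 : ZMod d → ℂ := fun u => (1/(d:ℂ)) * (τ d ^ ((((kt - u).val:ℤ))^2)
        * GS d ((u.val:ℤ) - Tt - (n:ℤ)*(((kt-u).val:ℤ)))) with hF2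
    have hinner : ∀ u : ZMod d,
        (∑ s' : Fin n → ZMod d,
          Uenc d n (k, s) (u, s') * (starRingEnd ℂ) (Uenc d n (kt, st) (u, s')))
        = if (∀ i, st i = s i + (k - kt)) then F1 u * (starRingEnd ℂ) (F2 u) else 0 := by
      intro u
      have h1 : ∀ s' : Fin n → ZMod d, Uenc d n (k,s) (u,s')
          = if s' = (fun i => s i + (k - u)) then F1 u else 0 := by
        intro s'
        rw [Uenc_apply]
        have hcond : (∀ i, (u, s').2 i = (k, s).2 i + ((k, s).1 - (u, s').1))
            ↔ (s' = fun i => s i + (k - u)) :=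
          ⟨fun h => funext h, fun h i => by rw [h]⟩
        exact if_congr hcond rfl rfl
      have hstep : ∀ s' : Fin n → ZMod d,
          Uenc d n (k, s) (u, s') * (starRingEnd ℂ) (Uenc d n (kt, st) (u, s'))
          = if s' = (fun i => s i + (k - u)) then
              F1 u * (starRingEnd ℂ) (Uenc d n (kt, st) (u, s')) else 0 := by
        intro s'
        rw [h1 s', ite_mul, zero_mul]
      rw [Finset.sum_congr rfl fun s' _ => hstep s',
        Finset.sum_ite_eq' Finset.univ (fun i => s i + (k - u)), if_pos (Finset.mem_univ _)]
      rw [Uenc_apply, apply_ite (starRingEnd ℂ), map_zero, mul_ite, mul_zero]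
      have hiff : (∀ i, (u, fun i => s i + (k - u)).2 i
            = (kt, st).2 i + ((kt, st).1 - (u, fun i => s i + (k - u)).1))
          ↔ (∀ i, st i = s i + (k - kt)) := by
        constructor <;> intro hh i <;> have h3 := hh i <;> dsimp only at h3 ⊢
        · linear_combination (-1 : ZMod d) * h3
        · linear_combination (-1 : ZMod d) * h3
      exact if_congr hiff rfl rfl
    rw [Finset.sum_congr rfl fun u _ => hinner u]
    by_cases hC : ∀ i, st i = s i + (k - kt)
    · simp only [if_pos hC]
      have hTT : (d:ℤ) ∣ (Tt - T) - (n:ℤ) * ((k.val:ℤ) - (kt.val:ℤ)) := by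
        have hcast : ((Tt : ℤ) : ZMod d)
            = ((T + (n:ℤ)*((k.val:ℤ) - (kt.val:ℤ)) : ℤ) : ZMod d) := by
          rw [hT, hTt]
          push_cast [ZMod.natCast_zmod_val]
          rw [Finset.sum_congr rfl (fun (i : Fin n) _ => hC i), Finset.sum_add_distrib,
            Finset.sum_const, Finset.card_univ, Fintype.card_fin, nsmul_eq_mul]
        have h6 := dvd_of_zmod_eq d hcast
        rwa [show (Tt : ℤ) - (T + (n:ℤ)*((k.val:ℤ) - (kt.val:ℤ)))
            = (Tt - T) - (n:ℤ) * ((k.val:ℤ) - (kt.val:ℤ)) from by ring] at h6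
      have hkey := key d n k kt T Tt hTT
      have hF : ∀ u : ZMod d, F1 u * (starRingEnd ℂ) (F2 u)
          = (1/(d:ℂ))^2 * ((τ d ^ ((((k - u).val:ℤ))^2)
              * GS d ((u.val:ℤ) - T - (n:ℤ)*(((k-u).val:ℤ))))
            * (starRingEnd ℂ) (τ d ^ ((((kt - u).val:ℤ))^2)
              * GS d ((u.val:ℤ) - Tt - (n:ℤ)*(((kt-u).val:ℤ))))) := by
        intro u
        rw [hF1, hF2]
        simp only [_root_.map_mul, map_div₀, _root_.map_one, map_natCast]
        ring
      rw [Finset.sum_congr rfl fun u _ => hF u, ← Finset.mul_sum, hkey]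
      by_cases hk : k = kt
      · have hs : s = st := funext fun i => by
          rw [hC i, hk, sub_self, add_zero]
        subst hk
        subst hs
        rw [if_pos rfl, Matrix.one_apply_eq]
        have hd0 : (d:ℂ) ≠ 0 := dC_ne_zero d
        field_simp
      · rw [if_neg hk, mul_zero, Matrix.one_apply_ne]
        intro he
        exact hk (congrArg Prod.fst he)
    · simp only [if_neg hC, Finset.sum_const_zero]
      rw [Matrix.one_apply_ne]
      intro he
      apply hC
      have hk : k = kt := congrArg Prod.fst he
      have hs : s = st := congrArg Prod.snd he
      intro i
      rw [← hs, ← hk, sub_self, add_zero]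
  exact ⟨hmain, mul_eq_one_comm.mp hmain⟩

end
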